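/- arXiv:0907.0615 — 5 statements merged into one kernel-verified Lean document; each statement's English description precedes it below -/
import Mathlib

section
/- Let μ : Σ → Σ* be a morphism prolongable on a ∈ Σ with infinite fixed point μ^ω(a) = y₀y₁y₂⋯, and let S be the abstract numeration system built on the directive language L_{μ,a} of (μ,a) with the ordered alphabet ({0,…,r_μ−1}, 0<⋯<r_μ−1). Then for all n ≥ 0, y_n = δ_μ(a, rep_S(n)). -/
/-- Application of a morphism (letter-to-word map) to a word. -/
def applyMorphism {σ : Type*} (μ : σ → List σ) (w : List σ) : List σ :=
  (w.map μ).flatten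

/-- `morphIter μ a k` is the word `μ^k(a)`. -/
def morphIter {σ : Type*} (μ : σ → List σ) (a : σ) (k : ℕ) : List σ :=
  (applyMorphism μ)^[k] [a]

/-- `μ` is prolongable on `a`: `μ(a)` begins with the letter `a`. -/
def Prolongable {σ : Type*} (μ : σ → List σ) (a : σ) : Prop :=
  ∃ u, μ a = a :: u

/-- `y : ℕ → σ` is the infinite fixed point `μ^ω(a)`: every iterate `μ^k(a)` is a
prefix of `y`, and the lengths of the iterates are unbounded. -/
def IsOmegaFixedPoint {σ : Type*} (μ : σ → List σ) (a : σ) (y : ℕ → σ) : Prop :=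
  (∀ k n, n < (morphIter μ a k).length → (morphIter μ a k)[n]? = some (y n)) ∧
  (∀ N, ∃ k, N < (morphIter μ a k).length)

/-- The (partial) transition function `δ_μ` of the automaton `𝒜_{μ,a}` extended to
words of digits: `δ_μ(b,i) = (μ(b))_i` when `i < |μ(b)|`, undefined (`none`) otherwise. -/
def deltaW {σ : Type*} (μ : σ → List σ) (b : σ) (w : List ℕ) : Option σ :=
  List.foldlM (fun s i => (μ s)[i]?) b w

/-- The directive language `L_{μ,a}` : the words accepted by `𝒜_{μ,a}` (all states
are final, so acceptance means the run is defined) which do not have `0` as a prefix. -/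
def directive {σ : Type*} (μ : σ → List σ) (a : σ) : Set (List ℕ) :=
  {w | (deltaW μ a w).isSome = true ∧ w.head? ≠ some 0}

/-- Genealogical (radix, shortlex) order on words of digits. -/
def GenLtN (u v : List ℕ) : Prop :=
  u.length < v.length ∨ (u.length = v.length ∧ List.Lex (· < ·) u v)

/-- `rep` is the genealogical enumeration of the language `L`. -/
def IsANSEnum (L : Set (List ℕ)) (rep : ℕ → List ℕ) : Prop :=
  (∀ n, rep n ∈ L) ∧ (∀ w ∈ L, ∃ n, rep n = w) ∧
  (∀ m n, m < n → GenLtN (rep m) (rep n))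

/-! Write `S m = |μ(y₀⋯y_{m-1})|`. The fixed-point equation `μ(y) = y` says that `μ(y_m)` is the
factor `y_{S m} ⋯ y_{S (m+1) - 1}`, so the positions of `y` form a tree in which `m` is the parent
of `S m, …, S (m+1) - 1`, the `i`-th child carrying the letter `μ(y_m)_i`. Hence `δ_μ(a, w) = y_n`
when `w` is the digit path from the root `0` to `n`. Since the iterates `μ^k(a)` are unbounded,
`S m > m` for `m ≥ 1`: every `n ≥ 1` has a parent `< n`, the paths are exactly the words of
`L_{μ,a}`, and they increase genealogically with `n`, so they are the enumeration `rep`. -/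

namespace List

theorem Lex.append_of_length_eq {α : Type*} {r : α → α → Prop} {u v : List α} (h : Lex r u v)
    (hlen : u.length = v.length) (s t : List α) : Lex r (u ++ s) (v ++ t) := by
  induction h with
  | nil => simp at hlen
  | cons _ ih => exact .cons (ih (by simpa using hlen))
  | rel hab => exact .rel hab

theorem Shortlex.append_singleton {α : Type*} {r : α → α → Prop} {u v : List α}
    (h : Shortlex r u v) (i j : α) : Shortlex r (u ++ [i]) (v ++ [j]) := by
  rcases shortlex_def.1 h with hlen | ⟨hlen, hlex⟩
  · exact .of_length_lt (by simpa using hlen)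
  · exact .of_lex (by simpa using hlen) (hlex.append_of_length_eq hlen _ _)

end List

theorem genLtN_iff_shortlex {u v : List ℕ} : GenLtN u v ↔ List.Shortlex (· < ·) u v :=
  List.shortlex_def.symm

theorem IsANSEnum.range_eq {L : Set (List ℕ)} {rep : ℕ → List ℕ} (h : IsANSEnum L rep) :
    Set.range rep = L :=
  Set.ext fun w => ⟨by rintro ⟨n, rfl⟩; exact h.1 n, h.2.1 w⟩

theorem eq_of_range_eq_of_strictMono {α : Type*} {r : α → α → Prop} [Std.Asymm r]
    {f g : ℕ → α} (hf : ∀ ⦃m n⦄, m < n → r (f m) (f n))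
    (hg : ∀ ⦃m n⦄, m < n → r (g m) (g n)) (hfg : Set.range f = Set.range g) : f = g := by
  funext n
  induction n using Nat.strong_induction_on with
  | _ n ih =>
    obtain ⟨j, hj⟩ : f n ∈ Set.range g := hfg ▸ Set.mem_range_self n
    obtain ⟨i, hi⟩ : g n ∈ Set.range f := hfg ▸ Set.mem_range_self n
    rcases lt_trichotomy j n with hjn | rfl | hnj
    · have := hf hjn
      rw [ih j hjn, hj] at this
      exact absurd this (Std.Irrefl.irrefl _)
    · exact hj.symm
    rcases lt_trichotomy i n with hin | rfl | hni
    · have := hg hin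
      rw [← ih i hin, hi] at this
      exact absurd this (Std.Irrefl.irrefl _)
    · exact hi
    · have := hf hni
      rw [← hj, hi] at this
      exact absurd (hg hnj) (Std.Asymm.asymm _ _ this)

namespace BlockTree

variable {S : ℕ → ℕ}

/- The `m` with `S m ≤ n < S (m + 1)` (see `parent_eq`). Searching only below `n` makes
`parent S n < n` hold for every `S`, so that `code` is well defined without hypotheses. -/
def parent (S : ℕ → ℕ) (n : ℕ) : ℕ :=
  Nat.findGreatest (fun m => S m ≤ n) (n - 1)

theorem parent_lt {n : ℕ} (hn : 0 < n) : parent S n < n := by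
  have := Nat.findGreatest_le (P := fun m => S m ≤ n) (n - 1)
  rw [parent]
  omega

theorem parent_mono : Monotone (parent S) := fun _ _ h =>
  Nat.findGreatest_mono (fun _ hm => hm.trans h) (Nat.sub_le_sub_right h 1)

theorem apply_parent_le (hS0 : S 0 = 0) (n : ℕ) : S (parent S n) ≤ n :=
  Nat.findGreatest_spec (P := fun m => S m ≤ n) (m := 0) (Nat.zero_le _) (by simp [hS0])

theorem lt_apply_parent_succ (hgrow : ∀ m, 0 < m → m < S m) (n : ℕ) :
    n < S (parent S n + 1) := by
  by_cases h : parent S n + 1 ≤ n - 1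
  · exact not_le.1 (Nat.findGreatest_is_greatest (P := fun m => S m ≤ n) (Nat.lt_succ_self _) h)
  · have := hgrow (parent S n + 1) (Nat.succ_pos _)
    omega

theorem parent_eq (hS0 : S 0 = 0) (hmono : Monotone S) (hgrow : ∀ m, 0 < m → m < S m)
    {m n : ℕ} (hmn : S m ≤ n) (hnm : n < S (m + 1)) : parent S n = m := by
  have h₁ := apply_parent_le hS0 n
  have h₂ := lt_apply_parent_succ hgrow n
  rcases lt_trichotomy (parent S n) m with h | h | h
  · have := hmono (show parent S n + 1 ≤ m by omega)
    omega
  · exact h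
  · have := hmono (show m + 1 ≤ parent S n by omega)
    omega

def code (S : ℕ → ℕ) : ℕ → List ℕ
  | 0 => []
  | n + 1 => code S (parent S (n + 1)) ++ [n + 1 - S (parent S (n + 1))]
decreasing_by exact parent_lt (Nat.succ_pos n)

@[simp] theorem code_zero : code S 0 = [] := by
  rw [code]

theorem code_of_pos {n : ℕ} (hn : 0 < n) :
    code S n = code S (parent S n) ++ [n - S (parent S n)] := by
  obtain ⟨k, rfl⟩ := Nat.exists_eq_succ_of_ne_zero hn.ne'
  rw [code]

theorem code_ne_nil {n : ℕ} (hn : 0 < n) : code S n ≠ [] := by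
  simp [code_of_pos hn]

theorem code_head?_ne_zero (hS0 : S 0 = 0) (n : ℕ) : (code S n).head? ≠ some 0 := by
  induction n using Nat.strong_induction_on with
  | _ n ih =>
    rcases Nat.eq_zero_or_pos n with rfl | hn
    · simp
    rw [code_of_pos hn]
    rcases Nat.eq_zero_or_pos (parent S n) with hp | hp
    · simp [hp, hS0, hn.ne']
    · obtain ⟨b, t, hbt⟩ := List.exists_cons_of_ne_nil (code_ne_nil (S := S) hp)
      have := ih _ (parent_lt (S := S) hn)
      simp_all

theorem code_strictMono (hS0 : S 0 = 0) {m n : ℕ} (hmn : m < n) :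
    List.Shortlex (· < ·) (code S m) (code S n) := by
  induction n using Nat.strong_induction_on generalizing m with
  | _ n ih =>
    have hn : 0 < n := by omega
    rcases Nat.eq_zero_or_pos m with rfl | hm
    · exact .of_length_lt (by simpa [List.length_pos_iff] using code_ne_nil (S := S) hn)
    rw [code_of_pos hm, code_of_pos hn]
    rcases (parent_mono (S := S) hmn.le).lt_or_eq with hp | hp
    · exact (ih _ (parent_lt hn) hp).append_singleton _ _
    · rw [hp]
      refine .append_left ((List.shortlex_singleton_iff _ _).2 ?_) _
      have := apply_parent_le hS0 (S := S) m
      rw [hp] at this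
      omega

def step (S : ℕ → ℕ) (m i : ℕ) : Option ℕ :=
  if S m + i < S (m + 1) then some (S m + i) else none

def run (S : ℕ → ℕ) (w : List ℕ) : Option ℕ :=
  w.foldlM (step S) 0

@[simp] theorem run_nil : run S [] = some 0 := rfl

theorem run_append_singleton (w : List ℕ) (i : ℕ) :
    run S (w ++ [i]) = (run S w).bind (step S · i) := by
  simp only [run, List.foldlM_append]
  cases List.foldlM (step S) 0 w <;> simp [List.foldlM]

theorem run_code (hS0 : S 0 = 0) (hgrow : ∀ m, 0 < m → m < S m) (n : ℕ) :
    run S (code S n) = some n := by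
  induction n using Nat.strong_induction_on with
  | _ n ih =>
    rcases Nat.eq_zero_or_pos n with rfl | hn
    · simp
    rw [code_of_pos hn, run_append_singleton, ih _ (parent_lt hn)]
    have h₁ := apply_parent_le hS0 (S := S) n
    have h₂ := lt_apply_parent_succ hgrow n
    simp only [Option.bind_some, step]
    rw [if_pos (by omega)]
    congr 1
    omega

theorem code_eq_of_run (hS0 : S 0 = 0) (hmono : Monotone S) (hgrow : ∀ m, 0 < m → m < S m)
    {w : List ℕ} {n : ℕ} (hrun : run S w = some n) (hhead : w.head? ≠ some 0) :
    code S n = w := by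
  induction w using List.reverseRecOn generalizing n with
  | nil =>
    obtain rfl : n = 0 := by simpa [eq_comm] using hrun
    exact code_zero
  | append_singleton u i ih =>
    rw [run_append_singleton] at hrun
    obtain ⟨m, hm, hstep⟩ := Option.bind_eq_some_iff.1 hrun
    simp only [step, Option.ite_none_right_eq_some, Option.some.injEq] at hstep
    obtain ⟨hlt, rfl⟩ := hstep
    have hu : code S m = u := ih hm (by cases u <;> simp_all)
    have hpos : 0 < S m + i := by
      rcases Nat.eq_zero_or_pos m with rfl | hm0
      · subst hu
        simp_all [Nat.pos_iff_ne_zero]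
      · have := hgrow m hm0
        omega
    rw [code_of_pos hpos, parent_eq hS0 hmono hgrow (Nat.le_add_right _ _) hlt, hu,
      Nat.add_sub_cancel_left]

theorem range_code (hS0 : S 0 = 0) (hmono : Monotone S) (hgrow : ∀ m, 0 < m → m < S m) :
    Set.range (code S) = {w | (run S w).isSome ∧ w.head? ≠ some 0} := by
  ext w
  constructor
  · rintro ⟨n, rfl⟩
    exact ⟨by simp [run_code hS0 hgrow], code_head?_ne_zero hS0 n⟩
  · rintro ⟨hrun, hhead⟩
    obtain ⟨n, hn⟩ := Option.isSome_iff_exists.1 hrun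
    exact ⟨n, code_eq_of_run hS0 hmono hgrow hn hhead⟩

end BlockTree

section FixedPoint

variable {σ : Type*}

def prefixWord (y : ℕ → σ) (m : ℕ) : List σ :=
  (List.range m).map y

@[simp] theorem length_prefixWord (y : ℕ → σ) (m : ℕ) : (prefixWord y m).length = m := by
  simp [prefixWord]

theorem getElem?_prefixWord (y : ℕ → σ) (m i : ℕ) :
    (prefixWord y m)[i]? = if i < m then some (y i) else none := by
  split_ifs with h <;> simp [prefixWord, h]

theorem prefixWord_succ (y : ℕ → σ) (m : ℕ) : prefixWord y (m + 1) = prefixWord y m ++ [y m] := by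
  simp [prefixWord, List.range_succ]

theorem prefixWord_isPrefix (y : ℕ → σ) {m n : ℕ} (h : m ≤ n) :
    prefixWord y m <+: prefixWord y n :=
  List.prefix_iff_eq_take.2 (by simp [prefixWord, ← List.map_take, List.take_range, h])

theorem eq_prefixWord_of_isPrefix {y : ℕ → σ} {l : List σ} {n : ℕ} (h : l <+: prefixWord y n) :
    l = prefixWord y l.length := by
  rw [List.prefix_iff_eq_take.1 h]
  simp [prefixWord, ← List.map_take, List.take_range]

theorem applyMorphism_append (μ : σ → List σ) (u v : List σ) :
    applyMorphism μ (u ++ v) = applyMorphism μ u ++ applyMorphism μ v := by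
  simp [applyMorphism]

@[simp] theorem applyMorphism_singleton (μ : σ → List σ) (b : σ) : applyMorphism μ [b] = μ b := by
  simp [applyMorphism]

theorem List.IsPrefix.applyMorphism {u v : List σ} (h : u <+: v) (μ : σ → List σ) :
    _root_.applyMorphism μ u <+: _root_.applyMorphism μ v :=
  (h.map μ).flatten

theorem deltaW_append_singleton (μ : σ → List σ) (b : σ) (u : List ℕ) (i : ℕ) :
    deltaW μ b (u ++ [i]) = (deltaW μ b u).bind (fun s => (μ s)[i]?) := by
  simp only [deltaW, List.foldlM_append]
  cases List.foldlM (fun s i => (μ s)[i]?) b u <;> simp [List.foldlM]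

def blockStart (μ : σ → List σ) (y : ℕ → σ) (m : ℕ) : ℕ :=
  (applyMorphism μ (prefixWord y m)).length

theorem blockStart_zero (μ : σ → List σ) (y : ℕ → σ) : blockStart μ y 0 = 0 := rfl

theorem blockStart_succ (μ : σ → List σ) (y : ℕ → σ) (m : ℕ) :
    blockStart μ y (m + 1) = blockStart μ y m + (μ (y m)).length := by
  simp [blockStart, prefixWord_succ, applyMorphism]

theorem blockStart_mono (μ : σ → List σ) (y : ℕ → σ) : Monotone (blockStart μ y) :=
  monotone_nat_of_le_succ fun m => by
    rw [blockStart_succ]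
    exact Nat.le_add_right _ _

namespace IsOmegaFixedPoint

variable {μ : σ → List σ} {a : σ} {y : ℕ → σ} (hfix : IsOmegaFixedPoint μ a y)
include hfix

theorem apply_zero : y 0 = a := by
  simpa [morphIter, eq_comm] using hfix.1 0 0

theorem morphIter_eq (k : ℕ) : morphIter μ a k = prefixWord y (morphIter μ a k).length :=
  List.ext_getElem? fun i => by
    rw [getElem?_prefixWord]
    split_ifs with hi
    · exact hfix.1 k i hi
    · exact List.getElem?_eq_none (not_lt.1 hi)

theorem applyMorphism_prefixWord (m : ℕ) :
    applyMorphism μ (prefixWord y m) = prefixWord y (blockStart μ y m) := by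
  obtain ⟨k, hk⟩ := hfix.2 m
  have h : applyMorphism μ (prefixWord y m) <+: morphIter μ a (k + 1) := by
    rw [morphIter, Function.iterate_succ_apply', ← morphIter, hfix.morphIter_eq k]
    exact (prefixWord_isPrefix y hk.le).applyMorphism μ
  rw [hfix.morphIter_eq] at h
  exact eq_prefixWord_of_isPrefix h

theorem getElem?_image (m i : ℕ) : (μ (y m))[i]? =
    if i < (μ (y m)).length then some (y (blockStart μ y m + i)) else none := by
  have h := hfix.applyMorphism_prefixWord (m + 1)
  rw [prefixWord_succ, applyMorphism_append, hfix.applyMorphism_prefixWord m,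
    applyMorphism_singleton] at h
  have := congrArg (·[blockStart μ y m + i]?) h
  rw [List.getElem?_append_right (by simp), length_prefixWord, Nat.add_sub_cancel_left,
    getElem?_prefixWord, blockStart_succ] at this
  simpa only [Nat.add_lt_add_iff_left] using this

/- If `|μ(y₀⋯y_{m-1})| ≤ m`, then every iterate `μ^k(a)` stays a prefix of `y₀⋯y_{m-1}`. -/
theorem lt_blockStart {m : ℕ} (hm : 0 < m) : m < blockStart μ y m := by
  by_contra! hle
  have hiter : ∀ k, morphIter μ a k <+: prefixWord y m := by
    intro k
    induction k with
    | zero => simpa [morphIter, prefixWord, hfix.apply_zero] using prefixWord_isPrefix y hm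
    | succ k ih =>
      rw [morphIter, Function.iterate_succ_apply', ← morphIter]
      have := ih.applyMorphism μ
      rw [hfix.applyMorphism_prefixWord] at this
      exact this.trans (prefixWord_isPrefix y hle)
  obtain ⟨k, hk⟩ := hfix.2 m
  have := (hiter k).length_le
  simp only [length_prefixWord] at this
  omega

theorem deltaW_eq_map_run (w : List ℕ) :
    deltaW μ a w = (BlockTree.run (blockStart μ y) w).map y := by
  induction w using List.reverseRecOn with
  | nil => simp [deltaW, hfix.apply_zero]
  | append_singleton u i ih =>
    rw [deltaW_append_singleton, BlockTree.run_append_singleton, ih]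
    cases BlockTree.run (blockStart μ y) u with
    | none => rfl
    | some m =>
      simp only [Option.map_some, Option.bind_some, hfix.getElem?_image, BlockTree.step,
        blockStart_succ, Nat.add_lt_add_iff_left]
      split_ifs <;> rfl

theorem directive_eq :
    directive μ a = {w | (BlockTree.run (blockStart μ y) w).isSome ∧ w.head? ≠ some 0} := by
  ext w
  simp [directive, hfix.deltaW_eq_map_run]

end IsOmegaFixedPoint

end FixedPoint

theorem stmt_2_general {σ : Type*} (μ : σ → List σ) (a : σ) (y : ℕ → σ)
    (hfix : IsOmegaFixedPoint μ a y)
    (rep : ℕ → List ℕ) (hrep : IsANSEnum (directive μ a) rep) :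
    ∀ n, deltaW μ a (rep n) = some (y n) := by
  have hS0 := blockStart_zero μ y
  have hgrow : ∀ m, 0 < m → m < blockStart μ y m := fun _ hm => hfix.lt_blockStart hm
  have hrep_eq : rep = BlockTree.code (blockStart μ y) := by
    refine eq_of_range_eq_of_strictMono (r := List.Shortlex (· < ·))
      (fun m n h => genLtN_iff_shortlex.1 (hrep.2.2 m n h))
      (fun _ _ h => BlockTree.code_strictMono hS0 h) ?_
    rw [hrep.range_eq, BlockTree.range_code hS0 (blockStart_mono μ y) hgrow, hfix.directive_eq]
  intro n
  rw [hrep_eq, hfix.deltaW_eq_map_run, BlockTree.run_code hS0 hgrow]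
  rfl

/-- Lemma `lem:dir`, first part. Let `μ` be prolongable on `a` with
infinite fixed point `μ^ω(a) = y₀y₁y₂⋯` and let `S` be the abstract numeration system
built on the directive language `L_{μ,a}` (digits ordered naturally). Then for all
`n ≥ 0`, `y_n = δ_μ(a, rep_S(n))`. -/
theorem stmt_2 {σ : Type*} (μ : σ → List σ) (a : σ) (y : ℕ → σ)
    (hprol : Prolongable μ a) (hfix : IsOmegaFixedPoint μ a y)
    (rep : ℕ → List ℕ) (hrep : IsANSEnum (directive μ a) rep) :
    ∀ n, deltaW μ a (rep n) = some (y n) :=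
  stmt_2_general μ a y hfix rep hrep
end

section
/- Let μ : Σ → Σ* be a morphism prolongable on a ∈ Σ with infinite fixed point μ^ω(a), and let S be the abstract numeration system built on the directive language L_{μ,a} with the ordered alphabet ({0,…,r_μ−1}, 0<⋯<r_μ−1). Then for every s ≥ 1 and every n ≥ 0: |rep_S(n)| = s if and only if |μ^{s−1}(a)| ≤ n ≤ |μ^s(a)| − 1. In particular, rep_S(0) = ε, and if 0 < n < |μ(a)| then rep_S(n) is the single digit n. -/
namespace DirectiveLanguage

variable {σ : Type*} (μ : σ → List σ)

lemma applyMorphism_eq_flatMap (w : List σ) : applyMorphism μ w = w.flatMap μ := rfl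

lemma iterate_applyMorphism_eq_flatMap (s : ℕ) (w : List σ) :
    (applyMorphism μ)^[s] w = w.flatMap fun c => (applyMorphism μ)^[s] [c] := by
  induction s generalizing w with
  | zero => simp
  | succ s ih =>
    simp only [Function.iterate_succ_apply, applyMorphism_eq_flatMap, List.flatMap_singleton]
    rw [ih, List.flatMap_assoc]
    simp only [← ih]

lemma length_iterate_applyMorphism_succ (s : ℕ) (b : σ) :
    ((applyMorphism μ)^[s + 1] [b]).length =
      ((μ b).map fun c => ((applyMorphism μ)^[s] [c]).length).sum := by
  rw [Function.iterate_succ_apply, applyMorphism_eq_flatMap, List.flatMap_singleton,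
    iterate_applyMorphism_eq_flatMap, List.length_flatMap]

lemma deltaW_cons (b : σ) (i : ℕ) (w : List ℕ) :
    deltaW μ b (i :: w) = (μ b)[i]?.bind fun c => deltaW μ c w := by
  simp [deltaW, List.foldlM_cons]

lemma deltaW_append (b : σ) (u v : List ℕ) :
    deltaW μ b (u ++ v) = (deltaW μ b u).bind fun c => deltaW μ c v := by
  simp [deltaW, List.foldlM_append]

def acceptedWords : ℕ → σ → List (List ℕ)
  | 0, _ => [[]]
  | s + 1, b => (μ b).zipIdx.flatMap fun p => (acceptedWords s p.1).map (p.2 :: ·)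

lemma mem_acceptedWords (s : ℕ) (b : σ) (w : List ℕ) :
    w ∈ acceptedWords μ s b ↔ w.length = s ∧ (deltaW μ b w).isSome := by
  induction s generalizing b w with
  | zero => simp +contextual [acceptedWords, deltaW, List.length_eq_zero_iff]
  | succ s ih =>
    cases w with
    | nil => simp [acceptedWords]
    | cons i u =>
      cases h : (μ b)[i]? <;>
        simp [acceptedWords, deltaW_cons, List.mem_zipIdx_iff_getElem?, ih, h]

lemma nodup_acceptedWords (s : ℕ) (b : σ) : (acceptedWords μ s b).Nodup := by
  induction s generalizing b with
  | zero => simp [acceptedWords]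
  | succ s ih =>
    rw [acceptedWords, List.nodup_flatMap]
    refine ⟨fun p _ => (ih p.1).map List.cons_injective, ?_⟩
    have hindex : ((μ b).zipIdx.map Prod.snd).Nodup := by
      rw [List.zipIdx_map_snd]
      exact List.nodup_range'
    refine (List.pairwise_map.mp hindex).imp fun hne => ?_
    simp only [Function.onFun, List.disjoint_left, List.mem_map]
    rintro _ ⟨u, -, rfl⟩ ⟨v, -, huv⟩
    exact hne (List.cons_eq_cons.mp huv).1.symm

lemma length_acceptedWords (s : ℕ) (b : σ) :
    (acceptedWords μ s b).length = ((applyMorphism μ)^[s] [b]).length := by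
  induction s generalizing b with
  | zero => rfl
  | succ s ih =>
    rw [acceptedWords, List.length_flatMap, length_iterate_applyMorphism_succ]
    conv_rhs => rw [← List.zipIdx_map_fst 0 (μ b), List.map_map]
    simp only [List.length_map, ih]
    rfl

variable {μ} {a : σ}

lemma deltaW_replicate_zero (hprol : Prolongable μ a) (k : ℕ) :
    deltaW μ a (List.replicate k 0) = some a := by
  obtain ⟨u, hu⟩ := hprol
  induction k with
  | zero => rfl
  | succ k ih => simp [List.replicate_succ, deltaW_cons, hu, ih]

lemma dropWhile_replicate_zero_append {u : List ℕ} (hu : u.head? ≠ some 0) (k : ℕ) :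
    (List.replicate k 0 ++ u).dropWhile (· == 0) = u := by
  induction k with
  | zero => cases u <;> simp_all
  | succ k ih => simp [List.replicate_succ, ih]

def padZeros (s : ℕ) (w : List ℕ) : List ℕ := List.replicate (s - w.length) 0 ++ w

lemma injOn_padZeros (s : ℕ) : Set.InjOn (padZeros s) {w | w.head? ≠ some 0} := by
  intro u hu v hv huv
  rw [← dropWhile_replicate_zero_append hu (s - u.length),
    ← dropWhile_replicate_zero_append hv (s - v.length)]
  exact congrArg _ huv

lemma padZeros_image (hprol : Prolongable μ a) (s : ℕ) :
    padZeros s '' (directive μ a ∩ {w | w.length ≤ s}) = {w | w ∈ acceptedWords μ s a} := by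
  ext v
  simp only [Set.mem_image, Set.mem_inter_iff, Set.mem_ofPred_eq, mem_acceptedWords]
  constructor
  · rintro ⟨w, ⟨⟨hrun, -⟩, hlen⟩, rfl⟩
    refine ⟨by simp [padZeros]; omega, ?_⟩
    rwa [padZeros, deltaW_append, deltaW_replicate_zero hprol, Option.bind_some]
  · rintro ⟨hlen, hrun⟩
    have hhead := List.head?_dropWhile_not (· == 0) v
    set t := v.takeWhile (· == 0)
    set w := v.dropWhile (· == 0)
    have ht : t = List.replicate t.length 0 :=
      List.eq_replicate_iff.mpr ⟨rfl, fun b hb => by simpa using List.mem_takeWhile_imp hb⟩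
    have hv : v = List.replicate t.length 0 ++ w := ht ▸ List.takeWhile_append_dropWhile.symm
    have hw : w.head? ≠ some 0 := fun h0 => by simp [h0] at hhead
    have hvlen : t.length + w.length = s := by
      rw [← hlen, hv, List.length_append, List.length_replicate]
    refine ⟨w, ⟨⟨?_, hw⟩, by omega⟩, ?_⟩
    · rwa [hv, deltaW_append, deltaW_replicate_zero hprol, Option.bind_some] at hrun
    · rw [padZeros, hv, show s - w.length = t.length by omega]

lemma finite_directive_length_le (hprol : Prolongable μ a) (s : ℕ) :
    (directive μ a ∩ {w | w.length ≤ s}).Finite :=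
  Set.Finite.of_finite_image
    (by rw [padZeros_image hprol]; exact (acceptedWords μ s a).finite_toSet)
    ((injOn_padZeros s).mono fun _ hw => hw.1.2)

lemma ncard_directive_length_le (hprol : Prolongable μ a) (s : ℕ) :
    (directive μ a ∩ {w | w.length ≤ s}).ncard = (morphIter μ a s).length := by
  rw [← ((injOn_padZeros s).mono fun _ hw => hw.1.2).ncard_image, padZeros_image hprol,
    ← List.coe_toFinset, Set.ncard_coe_finset,
    List.toFinset_card_of_nodup (nodup_acceptedWords μ s a), length_acceptedWords]
  rfl

end DirectiveLanguage

lemma GenLtN.irrefl (u : List ℕ) : ¬ GenLtN u u := by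
  rintro (h | ⟨-, h⟩)
  · exact lt_irrefl _ h
  · exact Std.Irrefl.irrefl u h

lemma GenLtN.length_le {u v : List ℕ} (h : GenLtN u v) : u.length ≤ v.length :=
  h.elim le_of_lt fun h => h.1.le

namespace IsANSEnum

variable {L : Set (List ℕ)} {rep : ℕ → List ℕ}

lemma injective (hrep : IsANSEnum L rep) : Function.Injective rep := by
  intro m n h
  by_contra hne
  rcases Nat.lt_or_gt_of_ne hne with hlt | hlt
  · exact GenLtN.irrefl _ (h ▸ hrep.2.2 m n hlt)
  · exact GenLtN.irrefl _ (h ▸ hrep.2.2 n m hlt)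

/-- `rep ⁻¹' D` is a finite lower set of `ℕ`, hence equal to `Set.Iio D.ncard`. -/
lemma mem_iff_lt_ncard (hrep : IsANSEnum L rep) {D : Set (List ℕ)} (hDL : D ⊆ L)
    (hD : D.Finite) (hdc : ∀ u ∈ L, ∀ v ∈ D, GenLtN u v → u ∈ D) (n : ℕ) :
    rep n ∈ D ↔ n < D.ncard := by
  have hlower : IsLowerSet (rep ⁻¹' D) := fun m k hkm hm => by
    rcases hkm.lt_or_eq with hlt | rfl
    · exact hdc _ (hrep.1 k) _ hm (hrep.2.2 k m hlt)
    · exact hm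
  have hcard : (rep ⁻¹' D).ncard = D.ncard := by
    rw [← Set.ncard_image_of_injective _ hrep.injective, Set.image_preimage_eq_of_subset]
    exact fun w hw => hrep.2.1 w (hDL hw)
  obtain hfull | ⟨k, hk⟩ := hlower.eq_univ_or_Iio
  · exact absurd (hfull ▸ hD.preimage hrep.injective.injOn) Set.infinite_univ
  · rw [← Set.mem_preimage, hk, Set.mem_Iio, ← hcard, hk, Set.ncard_Iio_nat]

end IsANSEnum

namespace DirectiveLanguage

variable {σ : Type*} {μ : σ → List σ} {a : σ} {rep : ℕ → List ℕ}

theorem length_rep_le_iff (hprol : Prolongable μ a) (hrep : IsANSEnum (directive μ a) rep)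
    (s n : ℕ) : (rep n).length ≤ s ↔ n < (morphIter μ a s).length := by
  rw [← ncard_directive_length_le hprol, ← hrep.mem_iff_lt_ncard Set.inter_subset_left
    (finite_directive_length_le hprol s)]
  · simp [hrep.1 n]
  · rintro u hu v ⟨-, hv⟩ huv
    exact ⟨hu, huv.length_le.trans hv⟩

theorem rep_zero (hprol : Prolongable μ a) (hrep : IsANSEnum (directive μ a) rep) :
    rep 0 = [] :=
  List.length_eq_zero_iff.mp <| Nat.le_zero.mp <|
    (length_rep_le_iff hprol hrep 0 0).mpr (by simp [morphIter])

def singletonsUpTo (m : ℕ) : Finset (List ℕ) :=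
  insert [] ((Finset.Icc 1 m).image fun d => [d])

lemma mem_singletonsUpTo {m : ℕ} {w : List ℕ} :
    w ∈ singletonsUpTo m ↔ w = [] ∨ ∃ d, (1 ≤ d ∧ d ≤ m) ∧ [d] = w := by
  simp [singletonsUpTo]

lemma card_singletonsUpTo (m : ℕ) : (singletonsUpTo m).card = m + 1 := by
  rw [singletonsUpTo, Finset.card_insert_of_notMem (by simp),
    Finset.card_image_of_injective _ List.singleton_injective, Nat.card_Icc, Nat.add_sub_cancel]

lemma singletonsUpTo_subset_directive {m : ℕ} (hm : m < (μ a).length) :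
    ↑(singletonsUpTo m) ⊆ directive μ a := by
  intro w hw
  rcases mem_singletonsUpTo.mp hw with rfl | ⟨d, hd, rfl⟩
  · exact ⟨rfl, by simp⟩
  · refine ⟨?_, by simp; omega⟩
    simp [List.getElem?_eq_getElem (show d < (μ a).length by omega), deltaW]

lemma singletonsUpTo_lowerClosed (m : ℕ) :
    ∀ u ∈ directive μ a, ∀ v ∈ (singletonsUpTo m : Set (List ℕ)), GenLtN u v →
      u ∈ (singletonsUpTo m : Set (List ℕ)) := by
  intro u hu v hv huv
  rw [Finset.mem_coe, mem_singletonsUpTo] at hv ⊢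
  rcases hv with rfl | ⟨d, hd, rfl⟩
  · rcases huv with h | ⟨h, -⟩
    · simp at h
    · exact Or.inl (List.length_eq_zero_iff.mp h)
  · rcases huv with h | ⟨h, hlex⟩
    · exact Or.inl (List.length_eq_zero_iff.mp (by simpa using h))
    · obtain ⟨e, rfl⟩ := List.length_eq_one_iff.mp h
      have he : e ≠ 0 := fun he => hu.2 (by simp [he])
      have hed : e < d := (List.lex_singleton_iff e d).mp hlex
      exact Or.inr ⟨e, ⟨by omega, by omega⟩, rfl⟩

lemma rep_mem_singletonsUpTo_iff (hrep : IsANSEnum (directive μ a) rep) {m : ℕ}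
    (hm : m < (μ a).length) (n : ℕ) : rep n ∈ singletonsUpTo m ↔ n ≤ m := by
  rw [← Finset.mem_coe, hrep.mem_iff_lt_ncard (singletonsUpTo_subset_directive hm)
    (Finset.finite_toSet _) (singletonsUpTo_lowerClosed m), Set.ncard_coe_finset,
    card_singletonsUpTo, Nat.lt_succ_iff]

theorem rep_eq_singleton (hrep : IsANSEnum (directive μ a) rep) {n : ℕ} (hn0 : 0 < n)
    (hn : n < (μ a).length) : rep n = [n] := by
  have hin := (rep_mem_singletonsUpTo_iff hrep hn n).mpr le_rfl
  have hout := (rep_mem_singletonsUpTo_iff hrep (m := n - 1) (by omega) n).not.mpr (by omega)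
  rw [mem_singletonsUpTo] at hin hout
  rcases hin with hnil | ⟨d, hd, hdrep⟩
  · exact absurd (Or.inl hnil) hout
  · have hdn : d = n := by
      by_contra hne
      exact hout (Or.inr ⟨d, ⟨hd.1, by omega⟩, hdrep⟩)
    rw [← hdrep, hdn]

end DirectiveLanguage

open DirectiveLanguage in
theorem stmt_5_general {σ : Type*} (μ : σ → List σ) (a : σ)
    (hprol : Prolongable μ a)
    (rep : ℕ → List ℕ) (hrep : IsANSEnum (directive μ a) rep) :
    (∀ s, 1 ≤ s → ∀ n,
      ((rep n).length = s ↔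
        (morphIter μ a (s - 1)).length ≤ n ∧ n ≤ (morphIter μ a s).length - 1)) ∧
    rep 0 = [] ∧
    (∀ n, 0 < n → n < (μ a).length → rep n = [n]) := by
  refine ⟨fun s hs n => ?_, rep_zero hprol hrep, fun n hn0 hn => rep_eq_singleton hrep hn0 hn⟩
  have hnonempty : 0 < (morphIter μ a s).length :=
    (length_rep_le_iff hprol hrep s 0).mp (by simp [rep_zero hprol hrep])
  have hle := length_rep_le_iff hprol hrep s n
  have hle_pred := length_rep_le_iff hprol hrep (s - 1) n
  omega

/-- condition `(ssi)`. For every `s ≥ 1` and every `n ≥ 0`,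
`|rep_S(n)| = s` iff `|μ^{s−1}(a)| ≤ n ≤ |μ^s(a)| − 1`. In particular `rep_S(0) = ε`
and, for `0 < n < |μ(a)|`, `rep_S(n)` is the single digit `n`. -/
theorem stmt_5 {σ : Type*} (μ : σ → List σ) (a : σ) (y : ℕ → σ)
    (hprol : Prolongable μ a) (hfix : IsOmegaFixedPoint μ a y)
    (rep : ℕ → List ℕ) (hrep : IsANSEnum (directive μ a) rep) :
    (∀ s, 1 ≤ s → ∀ n,
      ((rep n).length = s ↔
        (morphIter μ a (s - 1)).length ≤ n ∧ n ≤ (morphIter μ a s).length - 1)) ∧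
    rep 0 = [] ∧
    (∀ n, 0 < n → n < (μ a).length → rep n = [n]) :=
  stmt_5_general μ a hprol rep hrep
end

section
/- Let λ : Σ₁ → Σ₁* be a morphism prolongable on a with infinite fixed point x = λ^ω(a), and let μ : Σ₂ → Σ₂* be a morphism prolongable on b with infinite fixed point y = μ^ω(b). Then the directive languages L_{λ,a} and L_{μ,b} are equal if and only if Shape_λ(x) = Shape_μ(y), where Shape_λ(x) is the sequence (|λ(x_k)|)_{k≥0} and Shape_μ(y) is the sequence (|μ(y_k)|)_{k≥0}. -/
/-!
Let `s` be the shape of the fixed point `y = μ^ω(b)` and `S(p) = s 0 + ⋯ + s (p - 1)`. Since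
`μ(y) = y`, the block `μ(y p)` sits at positions `S(p), …, S(p) + s p - 1` of `y`, so reading `w`
in `𝒜_{μ,b}` from `y 0 = b` leads to `y q`, where `q` is computed from `s` alone. Hence the
directive language is a function of the shape.

Conversely, the runs of length `j` reach exactly the positions below `|μ^j(b)|`, and a word
reaching `p` extends by exactly the digits `i < s p`. An induction on `j` therefore recovers `s`
from the language on longer and longer prefixes. Words starting with `0` lose nothing, since
`s 0 > 0` and the digit `0` loops at position `0`.
-/

namespace ShapeAutomaton

variable (s : ℕ → ℕ)

def blockStart (m : ℕ) : ℕ := ∑ k ∈ Finset.range m, s k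

/-- Position `p` stands for the state `y p` of `𝒜_{μ,b}`, where `s` is the shape of `y`: the
digit `i` leads from `p` to the `i`-th letter of the block `μ(y p)`, found at `blockStart s p + i`. -/
def step (p i : ℕ) : Option ℕ := if i < s p then some (blockStart s p + i) else none

def run (p : ℕ) (w : List ℕ) : Option ℕ := w.foldlM (step s) p

def lang : Set (List ℕ) := {w | (run s 0 w).isSome ∧ w.head? ≠ some 0}

lemma blockStart_eq_sum_map_range (m : ℕ) : blockStart s m = ((List.range m).map s).sum := by
  rw [blockStart, Finset.sum_eq_multiset_sum, Finset.range_val, Multiset.range, Multiset.map_coe,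
    Multiset.sum_coe]

lemma blockStart_succ (m : ℕ) : blockStart s (m + 1) = blockStart s m + s m :=
  Finset.sum_range_succ s m

lemma blockStart_mono : Monotone (blockStart s) := fun _ _ h =>
  Finset.sum_le_sum_of_subset (Finset.range_mono h)

lemma step_eq_some {p i n : ℕ} :
    step s p i = some n ↔ i < s p ∧ blockStart s p + i = n := by
  unfold step; split_ifs <;> simp [*]

lemma run_cons (p i : ℕ) (w : List ℕ) : run s p (i :: w) = (step s p i).bind (run s · w) :=
  List.foldlM_cons

lemma run_append_singleton (p i : ℕ) (w : List ℕ) :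
    run s p (w ++ [i]) = (run s p w).bind (step s · i) := by
  simp [run, List.foldlM_append]

lemma run_zero_cons (h : 0 < s 0) (w : List ℕ) : run s 0 (0 :: w) = run s 0 w := by
  simp [run_cons, step, h, blockStart]

lemma lt_iterate_of_run_eq_some {w : List ℕ} {n : ℕ} (h : run s 0 w = some n) :
    n < (blockStart s)^[w.length] 1 := by
  induction w using List.reverseRecOn generalizing n with
  | nil => cases h; exact Nat.one_pos
  | append_singleton u i ih =>
    rw [run_append_singleton, Option.bind_eq_some_iff] at h
    obtain ⟨m, hm, hstep⟩ := h
    obtain ⟨hi, rfl⟩ := (step_eq_some s).1 hstep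
    rw [List.length_append, List.length_singleton, Function.iterate_succ_apply']
    calc blockStart s m + i < blockStart s (m + 1) := by rw [blockStart_succ]; omega
      _ ≤ _ := blockStart_mono s (ih hm)

lemma exists_step_eq_some {M n : ℕ} (h : n < blockStart s M) :
    ∃ m < M, ∃ i, step s m i = some n := by
  induction M with
  | zero => simp [blockStart] at h
  | succ M ih =>
    by_cases hn : n < blockStart s M
    · obtain ⟨m, hm, hstep⟩ := ih hn
      exact ⟨m, Nat.lt_succ_of_lt hm, hstep⟩
    · rw [blockStart_succ] at h
      exact ⟨M, M.lt_succ_self, n - blockStart s M, (step_eq_some s).2 ⟨by omega, by omega⟩⟩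

lemma exists_run_eq_some {j n : ℕ} (h : n < (blockStart s)^[j] 1) :
    ∃ w : List ℕ, w.length = j ∧ run s 0 w = some n := by
  induction j generalizing n with
  | zero => exact ⟨[], rfl, by simp_all [run]⟩
  | succ j ih =>
    rw [Function.iterate_succ_apply'] at h
    obtain ⟨m, hm, i, hstep⟩ := exists_step_eq_some s h
    obtain ⟨w, rfl, hw⟩ := ih hm
    exact ⟨w ++ [i], by simp, by rw [run_append_singleton, hw, Option.bind_some, hstep]⟩

lemma pos_of_unbounded (h : ∀ N, ∃ j, N < (blockStart s)^[j] 1) : 0 < s 0 := by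
  by_contra! h0
  have hle : ∀ j, (blockStart s)^[j] 1 ≤ 1 := by
    intro j
    induction j with
    | zero => rfl
    | succ j ih =>
      rw [Function.iterate_succ_apply']
      calc blockStart s _ ≤ blockStart s 1 := blockStart_mono s ih
        _ ≤ 1 := by simp [blockStart]; omega
  obtain ⟨j, hj⟩ := h 1
  exact (hle j).not_gt hj

variable {s₁ s₂ : ℕ → ℕ}

lemma isSome_run_iff_of_lang_eq (h₁ : 0 < s₁ 0) (h₂ : 0 < s₂ 0) (h : lang s₁ = lang s₂)
    (w : List ℕ) : (run s₁ 0 w).isSome ↔ (run s₂ 0 w).isSome := by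
  induction w with
  | nil => simp [run]
  | cons i w ih =>
    rcases Nat.eq_zero_or_pos i with rfl | hi
    · rwa [run_zero_cons _ h₁, run_zero_cons _ h₂]
    · simpa [lang, hi.ne'] using Set.ext_iff.1 h (i :: w)

lemma apply_eq_of_run_eq_some (hV : ∀ w, (run s₁ 0 w).isSome ↔ (run s₂ 0 w).isSome)
    {w : List ℕ} {n : ℕ} (h₁ : run s₁ 0 w = some n) (h₂ : run s₂ 0 w = some n) :
    s₁ n = s₂ n := by
  refine eq_of_forall_lt_iff fun i => ?_
  simpa [run_append_singleton, h₁, h₂, step, apply_ite] using hV (w ++ [i])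

lemma step_congr {m : ℕ} (h : ∀ k ≤ m, s₁ k = s₂ k) : step s₁ m = step s₂ m := by
  have : blockStart s₁ m = blockStart s₂ m :=
    Finset.sum_congr rfl fun k hk => h k (Finset.mem_range.1 hk).le
  funext i
  simp [step, h m le_rfl, this]

lemma run_eq_of_isSome_iff (hV : ∀ w, (run s₁ 0 w).isSome ↔ (run s₂ 0 w).isSome) :
    run s₁ 0 = run s₂ 0 := by
  suffices ∀ j, ∀ w : List ℕ, w.length = j → run s₁ 0 w = run s₂ 0 w from
    funext fun w => this _ w rfl
  intro j
  induction j with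
  | zero => intro w hw; rw [List.length_eq_zero_iff.1 hw]; rfl
  | succ j ih =>
    intro w hw
    obtain ⟨u, i, rfl⟩ : ∃ u i, w = u ++ [i] := by
      rcases List.eq_nil_or_concat w with rfl | h
      · simp at hw
      · simpa using h
    have hu : u.length = j := by simpa using hw
    rw [run_append_singleton, run_append_singleton, ← ih u hu]
    cases hrun : run s₁ 0 u with
    | none => rfl
    | some m =>
      have hm := lt_iterate_of_run_eq_some s₁ hrun
      rw [hu] at hm
      rw [Option.bind_some, Option.bind_some, step_congr fun k hk => ?_]
      obtain ⟨v, hv, hvk⟩ := exists_run_eq_some s₁ (lt_of_le_of_lt hk hm)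
      exact apply_eq_of_run_eq_some hV hvk (by rw [← ih v hv, hvk])

theorem lang_eq_iff (h₁ : ∀ N, ∃ j, N < (blockStart s₁)^[j] 1)
    (h₂ : ∀ N, ∃ j, N < (blockStart s₂)^[j] 1) : lang s₁ = lang s₂ ↔ s₁ = s₂ := by
  refine ⟨fun h => ?_, fun h => h ▸ rfl⟩
  have hV := isSome_run_iff_of_lang_eq (pos_of_unbounded s₁ h₁) (pos_of_unbounded s₂ h₂) h
  funext n
  obtain ⟨j, hj⟩ := h₁ n
  obtain ⟨w, -, hw⟩ := exists_run_eq_some s₁ hj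
  exact apply_eq_of_run_eq_some hV hw (by rw [← run_eq_of_isSome_iff hV, hw])

end ShapeAutomaton

section Morphism

open ShapeAutomaton

variable {σ : Type*} (μ : σ → List σ)

def shape (y : ℕ → σ) (k : ℕ) : ℕ := (μ (y k)).length

lemma morphIter_succ (b : σ) (k : ℕ) :
    morphIter μ b (k + 1) = applyMorphism μ (morphIter μ b k) :=
  Function.iterate_succ_apply' _ k [b]

lemma getElem?_applyMorphism_map_range (y : ℕ → σ) {L m : ℕ} (hm : m < L) (i : ℕ)
    (hi : i < shape μ y m) :
    (applyMorphism μ ((List.range L).map y))[blockStart (shape μ y) m + i]? =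
      (μ (y m))[i]? := by
  have hsum : (List.take m ((((List.range L).map y).map μ).map List.length)).sum =
      blockStart (shape μ y) m := by
    rw [List.map_map, List.map_map, ← List.map_take, List.take_range, min_eq_left hm.le,
      blockStart_eq_sum_map_range]
    rfl
  have hdrop : List.drop m (((List.range L).map y).map μ) =
      μ (y m) :: List.drop (m + 1) (((List.range L).map y).map μ) := by
    rw [List.drop_eq_getElem_cons (by simpa using hm)]
    simp
  rw [applyMorphism, ← hsum, ← List.getElem?_drop, List.drop_sum_flatten, hdrop, List.flatten_cons,
    List.getElem?_append_left hi]

variable {μ} {b : σ} {y : ℕ → σ}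

namespace IsOmegaFixedPoint

lemma apply_zero_s7 (hfix : IsOmegaFixedPoint μ b y) : y 0 = b := by
  simpa [morphIter] using (hfix.1 0 0 (by simp [morphIter])).symm

lemma morphIter_eq_s7 (hfix : IsOmegaFixedPoint μ b y) (k : ℕ) :
    morphIter μ b k = (List.range (morphIter μ b k).length).map y := by
  refine List.ext_getElem? fun n => ?_
  by_cases hn : n < (morphIter μ b k).length
  · rw [hfix.1 k n hn]; simp [hn]
  · simp [hn]

lemma getElem?_apply (hfix : IsOmegaFixedPoint μ b y) (m i : ℕ) :
    (μ (y m))[i]? = (step (shape μ y) m i).map y := by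
  by_cases hi : i < shape μ y m
  · obtain ⟨k, hk⟩ := hfix.2 m
    have hidx := getElem?_applyMorphism_map_range μ y hk i hi
    rw [← hfix.morphIter_eq_s7, ← morphIter_succ] at hidx
    obtain ⟨hlt, -⟩ := List.getElem?_eq_some_iff.1 (hidx.trans (List.getElem?_eq_getElem hi))
    rw [← hidx, hfix.1 _ _ hlt, step, if_pos hi, Option.map_some]
  · rw [step, if_neg hi, List.getElem?_eq_none (Nat.le_of_not_lt hi)]
    rfl

lemma deltaW_eq (hfix : IsOmegaFixedPoint μ b y) (w : List ℕ) (m : ℕ) :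
    deltaW μ (y m) w = (run (shape μ y) m w).map y := by
  induction w generalizing m with
  | nil => rfl
  | cons i w ih =>
    rw [deltaW, List.foldlM_cons, run_cons, hfix.getElem?_apply]
    cases step (shape μ y) m i with
    | none => rfl
    | some n => exact ih n

lemma directive_eq_s7 (hfix : IsOmegaFixedPoint μ b y) :
    directive μ b = lang (shape μ y) := by
  ext w
  simp [directive, lang, ← hfix.apply_zero_s7, hfix.deltaW_eq]

lemma length_morphIter (hfix : IsOmegaFixedPoint μ b y) (j : ℕ) :
    (morphIter μ b j).length = (blockStart (shape μ y))^[j] 1 := by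
  induction j with
  | zero => rfl
  | succ j ih =>
    rw [Function.iterate_succ_apply', ← ih, morphIter_succ, hfix.morphIter_eq_s7 j, applyMorphism,
      List.length_flatten, List.map_map, List.map_map, ih, List.length_map, List.length_range,
      blockStart_eq_sum_map_range]
    rfl

lemma unbounded (hfix : IsOmegaFixedPoint μ b y) (N : ℕ) :
    ∃ j, N < (blockStart (shape μ y))^[j] 1 := by
  simpa only [hfix.length_morphIter] using hfix.2 N

end IsOmegaFixedPoint

end Morphism

theorem stmt_7_general {σ₁ σ₂ : Type*} (lam : σ₁ → List σ₁) (a : σ₁) (x : ℕ → σ₁)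
    (mu : σ₂ → List σ₂) (b : σ₂) (y : ℕ → σ₂)
    (hfix₁ : IsOmegaFixedPoint lam a x)
    (hfix₂ : IsOmegaFixedPoint mu b y) :
    directive lam a = directive mu b ↔ ∀ k, (lam (x k)).length = (mu (y k)).length := by
  rw [hfix₁.directive_eq_s7, hfix₂.directive_eq_s7,
    ShapeAutomaton.lang_eq_iff hfix₁.unbounded hfix₂.unbounded, funext_iff]
  rfl

/-- Lemma `lem:shape`. Let `x = λ^ω(a)` and `y = μ^ω(b)` be infinite
fixed points of morphisms `λ` and `μ`. Then the directive languages `L_{λ,a}` and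
`L_{μ,b}` are equal iff `Shape_λ(x) = Shape_μ(y)`, i.e. iff `|λ(x_k)| = |μ(y_k)|`
for all `k ≥ 0`. -/
theorem stmt_7 {σ₁ σ₂ : Type*} (lam : σ₁ → List σ₁) (a : σ₁) (x : ℕ → σ₁)
    (mu : σ₂ → List σ₂) (b : σ₂) (y : ℕ → σ₂)
    (hprol₁ : Prolongable lam a) (hfix₁ : IsOmegaFixedPoint lam a x)
    (hprol₂ : Prolongable mu b) (hfix₂ : IsOmegaFixedPoint mu b y) :
    directive lam a = directive mu b ↔ ∀ k, (lam (x k)).length = (mu (y k)).length :=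
  stmt_7_general lam a x mu b y hfix₁ hfix₂
end

section
/- Let x : ℕ×ℕ → Γ be S-automatic for an abstract numeration system S=(L,Σ,<) with ε ∈ L, generated by a DFAO 𝒜=(Q_𝒜,q₀,(Σ∪{#})²,δ_𝒜,Γ,τ_𝒜) with δ_𝒜(q,(#,#))=q, and let 𝒫 be the product automaton with canonical 2-dimensional morphism μ_𝒫 and fixed point w = μ_𝒫^ω(p₀). Then the second component of w(m,n) depends only on m, the third component depends only on n, and for every (m,n) with w(m,n) ∉ F, either the second component of w(m,0) does not belong to F_ℒ (so that w(m,n') ∉ F for all n' ≥ 0) or the third component of w(0,n) does not belong to F_ℒ (so that w(m',n) ∉ F for all m' ≥ 0); i.e., the word obtained from w by replacing every letter not in F by a new symbol e is e-erasable. -/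
/-- Genealogical (radix, shortlex) order on words over an ordered alphabet. -/
def GenLt {Δ : Type*} [LT Δ] (u v : List Δ) : Prop :=
  u.length < v.length ∨ (u.length = v.length ∧ List.Lex (· < ·) u v)

/-- `(u,v)^#`: pad the shorter of `u, v` on the left with the padding symbol `#`
(modelled by `none`) so that both have equal length, and read the resulting pair as a
single word over the alphabet `(Σ ∪ {#})²`. -/
def padHash {Δ : Type*} (u v : List Δ) : List (Option Δ × Option Δ) :=
  List.zip (List.replicate (max u.length v.length - u.length) none ++ u.map some)
           (List.replicate (max u.length v.length - v.length) none ++ v.map some)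

/-- The enumeration `a₀ = #, a₁, …, a_r` of the padded alphabet `Σ ∪ {#}`, where the
alphabet `Σ` is `Fin r` with its natural order: `letter r 0 = #` and
`letter r i = a_i = i - 1` for `1 ≤ i ≤ r`. -/
def letter (r i : ℕ) : Option (Fin r) :=
  if h : 0 < i ∧ i - 1 < r then some ⟨i - 1, h.2⟩ else none

/-- The transition function of the product automaton `𝒫`, imitating the behaviour of
the DFAO `𝒜` (via `stepA`) and of two copies of the DFA `ℒ` (via `stepL`), one for
each dimension. -/
def productStep {QA QL Δ : Type*} (stepA : QA → Option Δ × Option Δ → QA)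
    (stepL : QL → Option Δ → QL) (p : QA × QL × QL) (ab : Option Δ × Option Δ) :
    QA × QL × QL :=
  (stepA p.1 ab, stepL p.2.1 ab.1, stepL p.2.2 ab.2)

/-!
The fixed point `w` of the product morphism satisfies
`w(m, n) = δ(w(⌊m/(r+1)⌋, ⌊n/(r+1)⌋), (a_{m mod (r+1)}, a_{n mod (r+1)}))`, and the second
component of `δ(p, (a, b))` is computed from the second component of `p` and the letter `a`
alone. By induction along `n ↦ ⌊n/(r+1)⌋`, the second component of `w(m, n)` therefore only
depends on `m`; symmetrically the third one only depends on `n`. Hence `w(m, n) ∉ F` means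
that either the whole column through `(m, n)` or the whole row through it misses `F`.
-/

section UniformFixedPoint

variable {Q β : Type*} {b : ℕ} {σ : Q → ℕ → ℕ → Q} {w : ℕ × ℕ → Q}

/-- `w` is a fixed point of the `b`-uniform two-dimensional morphism sending a letter `q` to
the `b × b` square `(i, j) ↦ σ q i j`. -/
def IsUniformFixedPoint (b : ℕ) (σ : Q → ℕ → ℕ → Q) (w : ℕ × ℕ → Q) : Prop :=
  ∀ m n, w (m, n) = σ (w (m / b, n / b)) (m % b) (n % b)

theorem IsUniformFixedPoint.swap (hw : IsUniformFixedPoint b σ w) :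
    IsUniformFixedPoint b (fun q i j => σ q j i) (w ∘ Prod.swap) :=
  fun m n => hw n m

theorem IsUniformFixedPoint.map_eq_map_zero_right (hb : 1 < b)
    (hw : IsUniformFixedPoint b σ w) (π : Q → β) (t : β → ℕ → β)
    (hπ : ∀ q i j, π (σ q i j) = t (π q) i) (m n : ℕ) :
    π (w (m, n)) = π (w (m, 0)) := by
  induction n using Nat.strong_induction_on generalizing m with
  | _ n ih =>
    rcases Nat.eq_zero_or_pos n with rfl | hn
    · rfl
    · rw [hw m n, hw m 0, hπ, hπ, ih _ (Nat.div_lt_self hn hb), Nat.zero_div]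

theorem IsUniformFixedPoint.map_eq_map_zero_left (hb : 1 < b)
    (hw : IsUniformFixedPoint b σ w) (π : Q → β) (t : β → ℕ → β)
    (hπ : ∀ q i j, π (σ q i j) = t (π q) j) (m n : ℕ) :
    π (w (m, n)) = π (w (0, n)) :=
  hw.swap.map_eq_map_zero_right hb π t (fun q i j => hπ q j i) n m

end UniformFixedPoint

theorem isUniformFixedPoint_productStep {QA QL : Type*} {r : ℕ}
    {stepA : QA → Option (Fin r) × Option (Fin r) → QA} {stepL : QL → Option (Fin r) → QL}
    {w : ℕ × ℕ → QA × QL × QL}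
    (hwrec : ∀ m n i j : ℕ, i ≤ r → j ≤ r →
      w ((r + 1) * m + i, (r + 1) * n + j) =
        productStep stepA stepL (w (m, n)) (letter r i, letter r j)) :
    IsUniformFixedPoint (r + 1)
      (fun p i j => productStep stepA stepL p (letter r i, letter r j)) w := by
  intro m n
  have h := hwrec (m / (r + 1)) (n / (r + 1)) (m % (r + 1)) (n % (r + 1))
    (Nat.le_of_lt_succ (Nat.mod_lt _ r.succ_pos)) (Nat.le_of_lt_succ (Nat.mod_lt _ r.succ_pos))
  rwa [Nat.div_add_mod, Nat.div_add_mod] at h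

theorem stmt_14_general {QA QL : Type*}
    (r : ℕ) (hr : 1 ≤ r)
    (stepA : QA → Option (Fin r) × Option (Fin r) → QA)
    (stepL : QL → Option (Fin r) → QL) (FL : Set QL)
    (w : ℕ × ℕ → QA × QL × QL)
    (hwrec : ∀ m n i j : ℕ, i ≤ r → j ≤ r →
      w ((r + 1) * m + i, (r + 1) * n + j) =
        productStep stepA stepL (w (m, n)) (letter r i, letter r j)) :
    (∀ m n n' : ℕ, (w (m, n)).2.1 = (w (m, n')).2.1) ∧
    (∀ m m' n : ℕ, (w (m, n)).2.2 = (w (m', n)).2.2) ∧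
    (∀ m n : ℕ, ¬((w (m, n)).2.1 ∈ FL ∧ (w (m, n)).2.2 ∈ FL) →
      ((w (m, 0)).2.1 ∉ FL ∧
        ∀ n' : ℕ, ¬((w (m, n')).2.1 ∈ FL ∧ (w (m, n')).2.2 ∈ FL)) ∨
      ((w (0, n)).2.2 ∉ FL ∧
        ∀ m' : ℕ, ¬((w (m', n)).2.1 ∈ FL ∧ (w (m', n)).2.2 ∈ FL))) := by
  have hb : 1 < r + 1 := by omega
  have hw := isUniformFixedPoint_productStep hwrec
  have col : ∀ m n, (w (m, n)).2.1 = (w (m, 0)).2.1 :=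
    hw.map_eq_map_zero_right hb (fun p => p.2.1) (fun l i => stepL l (letter r i))
      (fun _ _ _ => rfl)
  have row : ∀ m n, (w (m, n)).2.2 = (w (0, n)).2.2 :=
    hw.map_eq_map_zero_left hb (fun p => p.2.2) (fun l j => stepL l (letter r j))
      (fun _ _ _ => rfl)
  refine ⟨fun m n n' => by rw [col m n, col m n'], fun m m' n => by rw [row m n, row m' n],
    fun m n hmn => ?_⟩
  by_cases hm : (w (m, 0)).2.1 ∈ FL
  · have hn : (w (0, n)).2.2 ∉ FL := fun hn => hmn ⟨col m n ▸ hm, row m n ▸ hn⟩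
    exact Or.inr ⟨hn, fun m' h => hn (row m' n ▸ h.2)⟩
  · exact Or.inl ⟨hm, fun n' h => hm (col m n' ▸ h.1)⟩

/-- Let `x` be `S`-automatic for `S = (L, Σ, <)` with `ε ∈ L`
(alphabet `Σ = Fin r`, padding symbol `# = none`, `a₀ = # < a₁ < ⋯ < a_r`), generated
by a DFAO `𝒜` with `δ_𝒜(q,(#,#)) = q`.  Let `ℒ` be a DFA accepting `{#}*L` with
`δ_ℒ(ℓ₀,#) = ℓ₀`, let `𝒫` be the product automaton with states `Q_𝒜 × Q_ℒ × Q_ℒ`,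
initial state `p₀ = (q₀,ℓ₀,ℓ₀)` and final states `F = Q_𝒜 × F_ℒ × F_ℒ`, and let
`w = μ_𝒫^ω(p₀)` be the fixed point of the canonical 2-dimensional morphism `μ_𝒫`
(a uniform morphism of square size `r+1`, so `w((r+1)m+i,(r+1)n+j) = δ(w(m,n),(aᵢ,aⱼ))`).
Then the second component of `w(m,n)` depends only on `m`, the third component depends
only on `n`, and `λ(w)` (replace letters outside `F` by `e`) is `e`-erasable: whenever
`w(m,n) ∉ F`, either the second component of `w(m,0)` is not in `F_ℒ` and the whole
column `w(m,·)` avoids `F`, or the third component of `w(0,n)` is not in `F_ℒ` and the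
whole row `w(·,n)` avoids `F`. -/
theorem stmt_14 {Γ QA QL : Type*} [Fintype QA] [Fintype QL]
    (r : ℕ) (hr : 1 ≤ r)
    (stepA : QA → Option (Fin r) × Option (Fin r) → QA) (q₀ : QA) (τ : QA → Γ)
    (hA : ∀ q, stepA q (none, none) = q)
    (stepL : QL → Option (Fin r) → QL) (ℓ₀ : QL) (FL : Set QL)
    (hL0 : stepL ℓ₀ none = ℓ₀)
    (L : Set (List (Fin r)))
    (hacc : ∀ v : List (Option (Fin r)),
      v.foldl stepL ℓ₀ ∈ FL ↔
        ∃ (k : ℕ) (u : List (Fin r)), u ∈ L ∧ v = List.replicate k none ++ u.map some)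
    (hε : ([] : List (Fin r)) ∈ L)
    (rep : ℕ → List (Fin r))
    (hmem : ∀ n, rep n ∈ L) (hsurj : ∀ u ∈ L, ∃ n, rep n = u)
    (hmono : ∀ m n : ℕ, m < n → GenLt (rep m) (rep n))
    (x : ℕ × ℕ → Γ)
    (hx : ∀ m n : ℕ, x (m, n) = τ (List.foldl stepA q₀ (padHash (rep m) (rep n))))
    (w : ℕ × ℕ → QA × QL × QL)
    (hw0 : w (0, 0) = (q₀, ℓ₀, ℓ₀))
    (hwrec : ∀ m n i j : ℕ, i ≤ r → j ≤ r →
      w ((r + 1) * m + i, (r + 1) * n + j) =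
        productStep stepA stepL (w (m, n)) (letter r i, letter r j)) :
    (∀ m n n' : ℕ, (w (m, n)).2.1 = (w (m, n')).2.1) ∧
    (∀ m m' n : ℕ, (w (m, n)).2.2 = (w (m', n)).2.2) ∧
    (∀ m n : ℕ, ¬((w (m, n)).2.1 ∈ FL ∧ (w (m, n)).2.2 ∈ FL) →
      ((w (m, 0)).2.1 ∉ FL ∧
        ∀ n' : ℕ, ¬((w (m, n')).2.1 ∈ FL ∧ (w (m, n')).2.2 ∈ FL)) ∨
      ((w (0, n)).2.2 ∉ FL ∧
        ∀ m' : ℕ, ¬((w (m', n)).2.1 ∈ FL ∧ (w (m', n)).2.2 ∈ FL))) :=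
  stmt_14_general r hr stepA stepL FL w hwrec
end

section
/- Let x : ℕ×ℕ → Γ be S-automatic for an abstract numeration system S=(L,Σ,<) with ε ∈ L, generated by a DFAO 𝒜=(Q_𝒜,q₀,(Σ∪{#})²,δ_𝒜,Γ,τ_𝒜) with δ_𝒜(q,(#,#))=q, and let 𝒫 be the product automaton with canonical 2-dimensional morphism μ_𝒫 and fixed point w = μ_𝒫^ω(p₀). Let c : ℕ → ℕ be the strictly increasing enumeration of the set of indices m such that the second component of w(m,0) belongs to F_ℒ, and let r' : ℕ → ℕ be the strictly increasing enumeration of the set of indices n such that the third component of w(0,n) belongs to F_ℒ (both sets are infinite). Then for all m,n ≥ 0: w(c(m), r'(n)) = δ(p₀, (rep_S(m), rep_S(n))^#), and consequently τ_𝒜 applied to the first component of w(c(m), r'(n)) equals x(m,n). -/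
/-!
Read a word over `Σ ∪ {#}` as a numeral in base `r + 1`, with `#` as the digit `0` and the
letter `aᵢ` as the digit `i`. The recursion `w((r+1)m + i, (r+1)n + j) = δ(w(m,n), (aᵢ, aⱼ))`
says that `w(val a, val b)` is the state that `𝒫` reaches on the two-row word `(a, b)` of
equal length. Leading `#`s do not change the value, so the `ℒ`-component of `w(k, 0)` is final
exactly when `k = val(rep m)` for some `m`. As the genealogical order on `Σ*` agrees with the
numerical order of values, `m ↦ val(rep m)` is strictly increasing, hence it is both `c` and
`r'`, and `w(c m, r' n)` is the state reached on `(rep m, rep n)^#`.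
-/

namespace ProductAutomaton

variable {r : ℕ}

def digit : Option (Fin r) → ℕ
  | none => 0
  | some d => d + 1

lemma digit_le (o : Option (Fin r)) : digit o ≤ r := by
  cases o <;> simp [digit]

lemma letter_digit (o : Option (Fin r)) : letter r (digit o) = o := by
  cases o <;> simp [digit, letter]

lemma digit_letter {i : ℕ} (hi : i ≤ r) : digit (letter r i) = i := by
  unfold letter
  split_ifs <;> simp only [digit] <;> omega

variable (r) in
def paddedVal (a : List (Option (Fin r))) : ℕ :=
  a.foldl (fun acc o => (r + 1) * acc + digit o) 0

variable (r) in
def wordVal (u : List (Fin r)) : ℕ :=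
  paddedVal r (u.map some)

lemma paddedVal_append_singleton (a : List (Option (Fin r))) (o : Option (Fin r)) :
    paddedVal r (a ++ [o]) = (r + 1) * paddedVal r a + digit o := by
  simp [paddedVal, List.foldl_append]

lemma paddedVal_append (a b : List (Option (Fin r))) :
    paddedVal r (a ++ b) = paddedVal r a * (r + 1) ^ b.length + paddedVal r b := by
  induction b using List.reverseRecOn with
  | nil => simp [paddedVal]
  | append_singleton b o ih =>
    rw [← List.append_assoc, paddedVal_append_singleton, ih, paddedVal_append_singleton,
      List.length_append, List.length_singleton, pow_succ]
    ring

lemma paddedVal_replicate_none (k : ℕ) : paddedVal r (List.replicate k none) = 0 := by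
  induction k with
  | zero => rfl
  | succ k ih =>
    rw [List.replicate_succ', paddedVal_append_singleton, ih]
    rfl

lemma paddedVal_replicate_none_append (k : ℕ) (a : List (Option (Fin r))) :
    paddedVal r (List.replicate k none ++ a) = paddedVal r a := by
  simp [paddedVal_append, paddedVal_replicate_none]

lemma paddedVal_lt (a : List (Option (Fin r))) : paddedVal r a < (r + 1) ^ a.length := by
  induction a using List.reverseRecOn with
  | nil => simp [paddedVal]
  | append_singleton a o ih =>
    rw [paddedVal_append_singleton, List.length_append, List.length_singleton, pow_succ]
    nlinarith [digit_le o]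

lemma paddedVal_surjective (hr : 1 ≤ r) : Function.Surjective (paddedVal r) := by
  intro k
  induction k using Nat.strong_induction_on with
  | _ k ih =>
    rcases Nat.eq_zero_or_pos k with rfl | hk
    · exact ⟨[], rfl⟩
    · obtain ⟨a, ha⟩ := ih (k / (r + 1)) (Nat.div_lt_self hk (by omega))
      refine ⟨a ++ [letter r (k % (r + 1))], ?_⟩
      rw [paddedVal_append_singleton, ha,
        digit_letter (Nat.lt_succ_iff.mp (Nat.mod_lt k r.succ_pos))]
      exact Nat.div_add_mod k (r + 1)

lemma wordVal_lt (u : List (Fin r)) : wordVal r u < (r + 1) ^ u.length :=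
  (paddedVal_lt _).trans_eq (by rw [List.length_map])

lemma wordVal_cons (d : Fin r) (u : List (Fin r)) :
    wordVal r (d :: u) = (d + 1) * (r + 1) ^ u.length + wordVal r u := by
  rw [wordVal, List.map_cons, ← List.singleton_append, paddedVal_append, List.length_map]
  simp [paddedVal, digit, wordVal]

lemma wordVal_lt_of_lex {u v : List (Fin r)} (hlen : u.length = v.length)
    (h : List.Lex (· < ·) u v) : wordVal r u < wordVal r v := by
  induction h with
  | nil => simp at hlen
  | @rel d u e v hde =>
    have hl : u.length = v.length := by simpa using hlen
    have hu : wordVal r u < (r + 1) ^ v.length := hl ▸ wordVal_lt u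
    have hde' : (d : ℕ) + 1 ≤ e := hde
    rw [wordVal_cons, wordVal_cons, hl]
    nlinarith
  | @cons d u v _ ih =>
    have hl : u.length = v.length := by simpa using hlen
    rw [wordVal_cons, wordVal_cons, hl]
    exact Nat.add_lt_add_left (ih hl) _

lemma wordVal_lt_of_genLt {u v : List (Fin r)} (h : GenLt u v) : wordVal r u < wordVal r v := by
  rcases h with hlen | ⟨hlen, hlex⟩
  · obtain ⟨d, v, rfl⟩ := List.exists_cons_of_length_pos (u.length.zero_le.trans_lt hlen)
    have hu : u.length ≤ v.length := Nat.lt_succ_iff.mp hlen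
    calc wordVal r u < (r + 1) ^ u.length := wordVal_lt u
      _ ≤ (r + 1) ^ v.length := Nat.pow_le_pow_right r.succ_pos hu
      _ ≤ wordVal r (d :: v) := by
        rw [wordVal_cons]
        exact Nat.le_add_right_of_le (Nat.le_mul_of_pos_left _ d.val.succ_pos)
  · exact wordVal_lt_of_lex hlen hlex

lemma foldl_productStep {QA QL Δ : Type*} (stepA : QA → Option Δ × Option Δ → QA)
    (stepL : QL → Option Δ → QL) (l : List (Option Δ × Option Δ)) (p : QA × QL × QL) :
    l.foldl (productStep stepA stepL) p =
      (l.foldl stepA p.1, (l.map Prod.fst).foldl stepL p.2.1,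
        (l.map Prod.snd).foldl stepL p.2.2) := by
  induction l generalizing p with
  | nil => rfl
  | cons ab l ih => exact ih _

section FixedPoint

def IsFixedPoint {QA QL : Type*} (stepA : QA → Option (Fin r) × Option (Fin r) → QA)
    (stepL : QL → Option (Fin r) → QL) (p₀ : QA × QL × QL) (w : ℕ × ℕ → QA × QL × QL) :
    Prop :=
  w (0, 0) = p₀ ∧ ∀ m n i j : ℕ, i ≤ r → j ≤ r →
    w ((r + 1) * m + i, (r + 1) * n + j) =
      productStep stepA stepL (w (m, n)) (letter r i, letter r j)

variable {QA QL : Type*} {stepA : QA → Option (Fin r) × Option (Fin r) → QA} {q₀ : QA}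
  {stepL : QL → Option (Fin r) → QL} {ℓ₀ : QL} {w : ℕ × ℕ → QA × QL × QL}

lemma apply_paddedVal (hw : IsFixedPoint stepA stepL (q₀, ℓ₀, ℓ₀) w)
    {a b : List (Option (Fin r))} (hlen : a.length = b.length) :
    w (paddedVal r a, paddedVal r b) =
      (a.zip b).foldl (productStep stepA stepL) (q₀, ℓ₀, ℓ₀) := by
  induction a using List.reverseRecOn generalizing b with
  | nil =>
    obtain rfl := List.eq_nil_of_length_eq_zero hlen.symm
    exact hw.1
  | append_singleton a o ih =>
    obtain ⟨b, o', rfl⟩ : ∃ b' o', b = b' ++ [o'] :=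
      ⟨b.dropLast, b.getLast (by rintro rfl; simp at hlen),
        (List.dropLast_append_getLast _).symm⟩
    have hlen' : a.length = b.length := by simpa using hlen
    rw [paddedVal_append_singleton, paddedVal_append_singleton,
      hw.2 _ _ _ _ (digit_le o) (digit_le o'), letter_digit, letter_digit, ih hlen',
      List.zip_append hlen', List.foldl_append]
    rfl

lemma apply_padHash (hw : IsFixedPoint stepA stepL (q₀, ℓ₀, ℓ₀) w)
    (u v : List (Fin r)) :
    w (wordVal r u, wordVal r v) =
      (padHash u v).foldl (productStep stepA stepL) (q₀, ℓ₀, ℓ₀) := by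
  have hlen : (List.replicate (max u.length v.length - u.length) none ++ u.map some).length =
      (List.replicate (max u.length v.length - v.length) none ++ v.map some).length := by
    simp only [List.length_append, List.length_replicate, List.length_map]
    omega
  have h := apply_paddedVal hw hlen
  rwa [paddedVal_replicate_none_append, paddedVal_replicate_none_append] at h

lemma column_state_apply_paddedVal (hw : IsFixedPoint stepA stepL (q₀, ℓ₀, ℓ₀) w)
    (a : List (Option (Fin r))) :
    (w (paddedVal r a, 0)).2.1 = a.foldl stepL ℓ₀ := by
  have hlen : a.length = (List.replicate a.length (none : Option (Fin r))).length := by simp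
  rw [← paddedVal_replicate_none a.length, apply_paddedVal hw hlen, foldl_productStep,
    List.map_fst_zip hlen.le]

lemma row_state_apply_paddedVal (hw : IsFixedPoint stepA stepL (q₀, ℓ₀, ℓ₀) w)
    (a : List (Option (Fin r))) :
    (w (0, paddedVal r a)).2.2 = a.foldl stepL ℓ₀ := by
  have hlen : (List.replicate a.length (none : Option (Fin r))).length = a.length := by simp
  rw [← paddedVal_replicate_none a.length, apply_paddedVal hw hlen, foldl_productStep,
    List.map_snd_zip hlen.ge]

end FixedPoint

lemma setOf_final_eq_range_wordVal {QL : Type*} (hr : 1 ≤ r)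
    {stepL : QL → Option (Fin r) → QL} {ℓ₀ : QL} {FL : Set QL} {L : Set (List (Fin r))}
    (hacc : ∀ v : List (Option (Fin r)),
      v.foldl stepL ℓ₀ ∈ FL ↔
        ∃ (k : ℕ) (u : List (Fin r)), u ∈ L ∧ v = List.replicate k none ++ u.map some)
    {rep : ℕ → List (Fin r)} (hmem : ∀ n, rep n ∈ L) (hsurj : ∀ u ∈ L, ∃ n, rep n = u)
    {s : ℕ → QL} (hs : ∀ a, s (paddedVal r a) = a.foldl stepL ℓ₀) :
    {k | s k ∈ FL} = Set.range (fun m => wordVal r (rep m)) := by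
  ext k
  constructor
  · intro hk
    obtain ⟨a, rfl⟩ := paddedVal_surjective hr k
    obtain ⟨k, u, hu, rfl⟩ := (hacc a).mp ((hs a).symm ▸ hk)
    obtain ⟨m, rfl⟩ := hsurj u hu
    exact ⟨m, (paddedVal_replicate_none_append k _).symm⟩
  · rintro ⟨m, rfl⟩
    change s (paddedVal r _) ∈ FL
    rw [hs, hacc]
    exact ⟨0, rep m, hmem m, rfl⟩

end ProductAutomaton

open ProductAutomaton in
theorem stmt_15_general {Γ QA QL : Type*}
    (r : ℕ) (hr : 1 ≤ r)
    (stepA : QA → Option (Fin r) × Option (Fin r) → QA) (q₀ : QA) (τ : QA → Γ)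
    (stepL : QL → Option (Fin r) → QL) (ℓ₀ : QL) (FL : Set QL)
    (L : Set (List (Fin r)))
    (hacc : ∀ v : List (Option (Fin r)),
      v.foldl stepL ℓ₀ ∈ FL ↔
        ∃ (k : ℕ) (u : List (Fin r)), u ∈ L ∧ v = List.replicate k none ++ u.map some)
    (rep : ℕ → List (Fin r))
    (hmem : ∀ n, rep n ∈ L) (hsurj : ∀ u ∈ L, ∃ n, rep n = u)
    (hmono : ∀ m n : ℕ, m < n → GenLt (rep m) (rep n))
    (x : ℕ × ℕ → Γ)
    (hx : ∀ m n : ℕ, x (m, n) = τ (List.foldl stepA q₀ (padHash (rep m) (rep n))))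
    (w : ℕ × ℕ → QA × QL × QL)
    (hw0 : w (0, 0) = (q₀, ℓ₀, ℓ₀))
    (hwrec : ∀ m n i j : ℕ, i ≤ r → j ≤ r →
      w ((r + 1) * m + i, (r + 1) * n + j) =
        productStep stepA stepL (w (m, n)) (letter r i, letter r j)) :
    {k : ℕ | (w (k, 0)).2.1 ∈ FL}.Infinite ∧
    {k : ℕ | (w (0, k)).2.2 ∈ FL}.Infinite ∧
    ∀ c r' : ℕ → ℕ, StrictMono c → StrictMono r' →
      (∀ k : ℕ, (w (k, 0)).2.1 ∈ FL ↔ ∃ m, c m = k) →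
      (∀ k : ℕ, (w (0, k)).2.2 ∈ FL ↔ ∃ n, r' n = k) →
      ∀ m n : ℕ,
        w (c m, r' n) =
          List.foldl (productStep stepA stepL) (q₀, ℓ₀, ℓ₀)
            (padHash (rep m) (rep n)) ∧
        τ (w (c m, r' n)).1 = x (m, n) := by
  have hw : IsFixedPoint stepA stepL (q₀, ℓ₀, ℓ₀) w := ⟨hw0, hwrec⟩
  set f : ℕ → ℕ := fun m => wordVal r (rep m)
  have hf : StrictMono f := fun m n hmn => wordVal_lt_of_genLt (hmono m n hmn)
  have hcol : {k | (w (k, 0)).2.1 ∈ FL} = Set.range f :=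
    setOf_final_eq_range_wordVal hr hacc hmem hsurj (column_state_apply_paddedVal hw)
  have hrow : {k | (w (0, k)).2.2 ∈ FL} = Set.range f :=
    setOf_final_eq_range_wordVal hr hacc hmem hsurj (row_state_apply_paddedVal hw)
  refine ⟨hcol ▸ Set.infinite_range_of_injective hf.injective,
    hrow ▸ Set.infinite_range_of_injective hf.injective, ?_⟩
  intro c r' hc hr' hcc hrr m n
  obtain rfl : c = f := (hc.range_inj hf).mp <| hcol ▸ Set.ext fun k => (hcc k).symm
  obtain rfl : r' = f := (hr'.range_inj hf).mp <| hrow ▸ Set.ext fun k => (hrr k).symm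
  have hmain := apply_padHash hw (rep m) (rep n)
  refine ⟨hmain, ?_⟩
  rw [hmain, foldl_productStep, hx]

/-- In the setting of the product automaton `𝒫` (see Statement 14):
the set of column indices `m` whose `ℒ`-state (second component of `w(m,0)`) is final
and the set of row indices `n` whose `ℒ`-state (third component of `w(0,n)`) is final
are both infinite; and if `c` and `r'` are their strictly increasing enumerations, then
for all `m, n ≥ 0`, `w(c(m), r'(n)) = δ(p₀, (rep_S(m), rep_S(n))^#)` and consequently
`τ_𝒜` applied to the first component of `w(c(m), r'(n))` equals `x(m,n)`. -/
theorem stmt_15 {Γ QA QL : Type*} [Fintype QA] [Fintype QL]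
    (r : ℕ) (hr : 1 ≤ r)
    (stepA : QA → Option (Fin r) × Option (Fin r) → QA) (q₀ : QA) (τ : QA → Γ)
    (hA : ∀ q, stepA q (none, none) = q)
    (stepL : QL → Option (Fin r) → QL) (ℓ₀ : QL) (FL : Set QL)
    (hL0 : stepL ℓ₀ none = ℓ₀)
    (L : Set (List (Fin r)))
    (hacc : ∀ v : List (Option (Fin r)),
      v.foldl stepL ℓ₀ ∈ FL ↔
        ∃ (k : ℕ) (u : List (Fin r)), u ∈ L ∧ v = List.replicate k none ++ u.map some)
    (hε : ([] : List (Fin r)) ∈ L)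
    (rep : ℕ → List (Fin r))
    (hmem : ∀ n, rep n ∈ L) (hsurj : ∀ u ∈ L, ∃ n, rep n = u)
    (hmono : ∀ m n : ℕ, m < n → GenLt (rep m) (rep n))
    (x : ℕ × ℕ → Γ)
    (hx : ∀ m n : ℕ, x (m, n) = τ (List.foldl stepA q₀ (padHash (rep m) (rep n))))
    (w : ℕ × ℕ → QA × QL × QL)
    (hw0 : w (0, 0) = (q₀, ℓ₀, ℓ₀))
    (hwrec : ∀ m n i j : ℕ, i ≤ r → j ≤ r →
      w ((r + 1) * m + i, (r + 1) * n + j) =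
        productStep stepA stepL (w (m, n)) (letter r i, letter r j)) :
    {k : ℕ | (w (k, 0)).2.1 ∈ FL}.Infinite ∧
    {k : ℕ | (w (0, k)).2.2 ∈ FL}.Infinite ∧
    ∀ c r' : ℕ → ℕ, StrictMono c → StrictMono r' →
      (∀ k : ℕ, (w (k, 0)).2.1 ∈ FL ↔ ∃ m, c m = k) →
      (∀ k : ℕ, (w (0, k)).2.2 ∈ FL ↔ ∃ n, r' n = k) →
      ∀ m n : ℕ,
        w (c m, r' n) =
          List.foldl (productStep stepA stepL) (q₀, ℓ₀, ℓ₀)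
            (padHash (rep m) (rep n)) ∧
        τ (w (c m, r' n)).1 = x (m, n) :=
  stmt_15_general r hr stepA q₀ τ stepL ℓ₀ FL L hacc rep hmem hsurj hmono x hx w hw0 hwrec
end
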